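/- For all $(a,b)$ with $0 < a$, $0 < b$, $a + b < 4$, the Hessian of $f(a,b) := 4 + \frac{1}{2}\big(ab - 2a - 2b - \sqrt{ab(4-a)(4-b)}\big)$ is positive definite; in particular $\frac{\partial^2 f}{\partial a^2} = \frac{2}{a(4-a)}\sqrt{\frac{b(4-b)}{a(4-a)}} > 0$. -/

import Mathlib

/-!
Writing `s t = √(t (4 - t))`, for `x ∈ (0, 4)` the function splits as
`f x y = 4 - y + (y - 2) x / 2 - s x s y / 2`, so each partial second derivative only involves
`s'(t) = (2 - t) / s t` and `s''(t) = -4 / s t ^ 3`, the latter because `s t ^ 2 + (2 - t) ^ 2 = 4`.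
This gives `f_xx = 2 s b / s a ^ 3`, `f_yy = 2 s a / s b ^ 3` and
`f_xy = (1 - (2 - a)(2 - b) / (s a s b)) / 2`, hence
`f_xx f_yy - f_xy ^ 2 = (16 - (s a s b - (2 - a)(2 - b)) ^ 2) / (4 s a ^ 2 s b ^ 2)`.
Putting `2 - a = 2 cos α`, `s a = 2 sin α` and likewise for `b` with `β`, the bracket is
`-4 cos (α + β)`, and `a + b < 4` means `α + β < π`.
-/

noncomputable def f (a b : ℝ) : ℝ :=
  4 + 1 / 2 * (a * b - 2 * a - 2 * b - Real.sqrt (a * b * (4 - a) * (4 - b)))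

noncomputable def semicircle (t : ℝ) : ℝ := Real.sqrt (t * (4 - t))

section Semicircle

variable {t : ℝ}

lemma semicircle_sq (ht : 0 ≤ t * (4 - t)) : semicircle t ^ 2 = t * (4 - t) :=
  Real.sq_sqrt ht

lemma semicircle_pos (h0 : 0 < t) (h4 : t < 4) : 0 < semicircle t :=
  Real.sqrt_pos.2 (mul_pos h0 (sub_pos.2 h4))

lemma hasDerivAt_semicircle (h0 : 0 < t) (h4 : t < 4) :
    HasDerivAt semicircle ((2 - t) / semicircle t) t := by
  have hprod : HasDerivAt (fun x : ℝ => x * (4 - x)) (4 - 2 * t) t := by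
    simpa using ((hasDerivAt_id' t).fun_mul ((hasDerivAt_id' t).const_sub 4)).congr_deriv (by ring)
  have h := hprod.sqrt (mul_pos h0 (sub_pos.2 h4)).ne'
  refine h.congr_deriv ?_
  have hs := (semicircle_pos h0 h4).ne'
  unfold semicircle at hs ⊢
  field_simp
  ring

lemma hasDerivAt_slope_semicircle (h0 : 0 < t) (h4 : t < 4) :
    HasDerivAt (fun x => (2 - x) / semicircle x) (-4 / semicircle t ^ 3) t := by
  have hs := semicircle_pos h0 h4
  have h := ((hasDerivAt_id' t).const_sub 2).fun_div (hasDerivAt_semicircle h0 h4) hs.ne'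
  refine h.congr_deriv ?_
  have hsq := semicircle_sq (mul_pos h0 (sub_pos.2 h4)).le
  field_simp
  linear_combination -hsq

lemma sq_semicircle_mul_sub_lt {a b : ℝ} (ha : 0 < a) (hb : 0 < b) (hab : a + b < 4) :
    (semicircle a * semicircle b - (2 - a) * (2 - b)) ^ 2 < 16 := by
  have hsa := semicircle_sq (mul_pos ha (by linarith : (0 : ℝ) < 4 - a)).le
  have hsb := semicircle_sq (mul_pos hb (by linarith : (0 : ℝ) < 4 - b)).le
  have hS : 0 ≤ semicircle a * semicircle b :=
    mul_nonneg (Real.sqrt_nonneg _) (Real.sqrt_nonneg _)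
  have hsq : (semicircle a * semicircle b) ^ 2 + 4 * (4 - a - b) ^ 2
      = (4 + (2 - a) * (2 - b)) ^ 2 := by
    rw [mul_pow, hsa, hsb]
    ring
  have hpos : 0 < 4 + (2 - a) * (2 - b) := by nlinarith [mul_pos ha hb]
  have hupper : semicircle a * semicircle b < 4 + (2 - a) * (2 - b) := by
    nlinarith [mul_pos (by linarith : (0 : ℝ) < 4 - a - b) (by linarith : (0 : ℝ) < 4 - a - b)]
  have hlower : (2 - a) * (2 - b) - 4 < semicircle a * semicircle b := by
    nlinarith [mul_pos ha hb]
  nlinarith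

end Semicircle

section PartialDerivatives

lemma f_eq_of_nonneg {x : ℝ} (hx : 0 ≤ x * (4 - x)) (y : ℝ) :
    f x y = 4 - y + (y - 2) / 2 * x - semicircle y / 2 * semicircle x := by
  unfold f semicircle
  rw [show x * y * (4 - x) * (4 - y) = x * (4 - x) * (y * (4 - y)) by ring, Real.sqrt_mul hx]
  ring

lemma f_comm (x y : ℝ) : f x y = f y x := by
  unfold f
  ring_nf

variable {x : ℝ}

lemma hasDerivAt_f_left (h0 : 0 < x) (h4 : x < 4) (y : ℝ) :
    HasDerivAt (fun x' => f x' y)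
      ((y - 2) / 2 - semicircle y / 2 * ((2 - x) / semicircle x)) x := by
  have h := (((hasDerivAt_id' x).const_mul ((y - 2) / 2)).const_add (4 - y)).fun_sub
    ((hasDerivAt_semicircle h0 h4).const_mul (semicircle y / 2))
  refine (h.congr_deriv (by simp)).congr_of_eventuallyEq ?_
  filter_upwards [Ioo_mem_nhds h0 h4] with x' hx'
  exact f_eq_of_nonneg (mul_pos hx'.1 (sub_pos.2 hx'.2)).le y

lemma deriv_deriv_f_left (h0 : 0 < x) (h4 : x < 4) (y : ℝ) :
    deriv (fun x => deriv (fun x' => f x' y) x) x = 2 * semicircle y / semicircle x ^ 3 := by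
  have hfirst : (fun x => deriv (fun x' => f x' y) x)
      =ᶠ[nhds x] fun x => (y - 2) / 2 - semicircle y / 2 * ((2 - x) / semicircle x) := by
    filter_upwards [Ioo_mem_nhds h0 h4] with x' hx'
    exact (hasDerivAt_f_left hx'.1 hx'.2 y).deriv
  rw [hfirst.deriv_eq, (((hasDerivAt_slope_semicircle h0 h4).const_mul _).const_sub _).deriv]
  ring

lemma deriv_deriv_f_mixed {a b : ℝ} (ha0 : 0 < a) (ha4 : a < 4) (hb0 : 0 < b) (hb4 : b < 4) :
    deriv (fun y => deriv (fun x => f x y) a) b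
      = (1 - (2 - a) / semicircle a * ((2 - b) / semicircle b)) / 2 := by
  have hfirst : (fun y => deriv (fun x => f x y) a)
      = fun y => (y - 2) / 2 - semicircle y / 2 * ((2 - a) / semicircle a) :=
    funext fun y => (hasDerivAt_f_left ha0 ha4 y).deriv
  have h := (((hasDerivAt_id' b).sub_const 2).div_const 2).fun_sub
    (((hasDerivAt_semicircle hb0 hb4).div_const 2).mul_const ((2 - a) / semicircle a))
  rw [hfirst, h.deriv]
  ring

end PartialDerivatives

theorem stmt_11 (a b : ℝ) (ha : 0 < a) (hb : 0 < b) (hab : a + b < 4) :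
    deriv (fun x => deriv (fun x' => f x' b) x) a
      = 2 / (a * (4 - a)) * Real.sqrt (b * (4 - b) / (a * (4 - a))) ∧
    0 < deriv (fun x => deriv (fun x' => f x' b) x) a ∧
    0 < deriv (fun x => deriv (fun x' => f x' b) x) a *
          deriv (fun y => deriv (fun y' => f a y') y) b -
        deriv (fun y => deriv (fun x => f x y) a) b ^ 2 := by
  have ha4 : a < 4 := by linarith
  have hb4 : b < 4 := by linarith
  have hsa := semicircle_pos ha ha4
  have hsb := semicircle_pos hb hb4
  have hsa2 := semicircle_sq (mul_pos ha (sub_pos.2 ha4)).le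
  have hfaa := deriv_deriv_f_left ha ha4 b
  have hfbb : deriv (fun y => deriv (fun y' => f a y') y) b
      = 2 * semicircle a / semicircle b ^ 3 := by
    simp only [f_comm a]
    exact deriv_deriv_f_left hb hb4 a
  rw [hfaa, hfbb, deriv_deriv_f_mixed ha ha4 hb hb4]
  refine ⟨?_, by positivity, ?_⟩
  · rw [Real.sqrt_div' _ (mul_pos ha (sub_pos.2 ha4)).le, ← hsa2, Real.sqrt_sq hsa.le]
    unfold semicircle
    field_simp
  · have hdet : 2 * semicircle b / semicircle a ^ 3 * (2 * semicircle a / semicircle b ^ 3)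
        - ((1 - (2 - a) / semicircle a * ((2 - b) / semicircle b)) / 2) ^ 2
        = (16 - (semicircle a * semicircle b - (2 - a) * (2 - b)) ^ 2)
          / (4 * semicircle a ^ 2 * semicircle b ^ 2) := by
      field_simp
      ring
    rw [hdet]
    have hbracket := sq_semicircle_mul_sub_lt ha hb hab
    apply div_pos <;> [linarith; positivity]
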